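/- Component relevancy of the multistate series structure function: for natural numbers l and j with l ≠ j, a nonempty list L of natural numbers, and an index i < length L, if every element of L is strictly greater than j and the minimum of the list obtained from L by replacing its i-th element with j equals j, then the minimum of the list obtained from L by replacing its i-th element with l is not equal to j. -/

import Mathlib

/-- Multistate series structure function: the minimum of the component states. -/
def seriesMS : List ℕ → ℕ
  | [] => 0
  | [x] => x
  | x :: y :: ys => min x (seriesMS (y :: ys))

theorem seriesMS_mem : ∀ {L : List ℕ}, L ≠ [] → seriesMS L ∈ L
  | [x], _ => List.mem_singleton_self x
  | x :: y :: ys, _ => by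
    rw [seriesMS]
    rcases min_choice x (seriesMS (y :: ys)) with h | h <;> rw [h]
    · exact List.mem_cons_self
    · exact List.mem_cons_of_mem x (seriesMS_mem (List.cons_ne_nil y ys))

theorem seriesMS_relevancy_general (l j : ℕ) (L : List ℕ) (i : ℕ)
    (h1 : l ≠ j) (h3 : L ≠ [])
    (h4 : ∀ x ∈ L, x > j) :
    seriesMS (L.set i l) ≠ j := by
  intro hj
  have hmem : j ∈ L.set i l := hj ▸ seriesMS_mem (by simpa using h3)
  rcases List.mem_or_eq_of_mem_set hmem with hjL | rfl
  · exact lt_irrefl j (h4 j hjL)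
  · exact h1 rfl

/-- Component relevancy of the multistate series structure function. -/
theorem seriesMS_relevancy (l j : ℕ) (L : List ℕ) (i : ℕ)
    (h1 : l ≠ j) (h2 : i < L.length) (h3 : L ≠ [])
    (h4 : ∀ x ∈ L, x > j) (h5 : seriesMS (L.set i j) = j) :
    seriesMS (L.set i l) ≠ j :=
  seriesMS_relevancy_general l j L i h1 h3 h4
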